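/- The map R(β1,β2) : (x,y) ↦ (p,q) on ℂ²×ℂ² defined by p=(y¹+y²·(1−P), y²·P) and q=(x¹−y²·(1−P), x²·P⁻¹), where P = (y²−x¹−β2)/(y²−x¹−β1), is unitary: for all x,y ∈ ℂ² with all occurring denominators nonzero, if R(β1,β2)(x,y) = (p,q) then R(β2,β1)(q,p) = (y,x). -/
import Mathlib

noncomputable section

abbrev X2 : Type := ℂ × ℂ

/-- `P = (y²−x¹−β2)/(y²−x¹−β1)` for `z = ((x¹,x²),(y¹,y²))`. -/
def Pval (β1 β2 : ℂ) (z : X2 × X2) : ℂ :=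
  (z.2.2 - z.1.1 - β2) / (z.2.2 - z.1.1 - β1)

/-- The Yang–Baxter map from system `E3`:
`p = (y¹+y²·(1−P), y²·P)`, `q = (x¹−y²·(1−P), x²·P⁻¹)`. -/
def R (β1 β2 : ℂ) (z : X2 × X2) : X2 × X2 :=
  ((z.2.1 + z.2.2 * (1 - Pval β1 β2 z), z.2.2 * Pval β1 β2 z),
   (z.1.1 - z.2.2 * (1 - Pval β1 β2 z), z.1.2 * (Pval β1 β2 z)⁻¹))

/-- All denominators occurring in `R(β1,β2)` are nonzero at `z`. -/
def D (β1 β2 : ℂ) (z : X2 × X2) : Prop :=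
  z.2.2 - z.1.1 - β1 ≠ 0 ∧ Pval β1 β2 z ≠ 0

/-- Unitarity of the Yang–Baxter map obtained from system `E3`:
if `R(β1,β2)(x,y) = (p,q)`, then `R(β2,β1)(q,p) = (y,x)`, wherever all occurring
denominators are nonzero. -/
theorem unitarity_E3 (β1 β2 : ℂ) (x y : X2)
    (h1 : D β1 β2 (x, y))
    (h2 : D β2 β1 ((R β1 β2 (x, y)).2, (R β1 β2 (x, y)).1)) :
    R β2 β1 ((R β1 β2 (x, y)).2, (R β1 β2 (x, y)).1) = (y, x) := by
  obtain ⟨hd1, hP1⟩ := h1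
  obtain ⟨hd2, hP2⟩ := h2
  simp only [D, R, Pval] at *
  have hd1' : y.2 - x.1 - β2 ≠ 0 := fun h => hP1 (by rw [h]; simp)
  have key : y.2 * ((y.2 - x.1 - β2) / (y.2 - x.1 - β1)) -
      (x.1 - y.2 * (1 - (y.2 - x.1 - β2) / (y.2 - x.1 - β1))) = y.2 - x.1 := by
    field_simp
    ring
  rw [key] at *
  have hP' : (y.2 - x.1 - β1) / (y.2 - x.1 - β2) =
      ((y.2 - x.1 - β2) / (y.2 - x.1 - β1))⁻¹ := (inv_div _ _).symm
  rw [hP'] at *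
  set P := (y.2 - x.1 - β2) / (y.2 - x.1 - β1) with hPdef
  ext <;> simp <;> field_simp <;> ring
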